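/- arXiv:1803.00773 — 2 statements merged into one kernel-verified Lean document; each statement's English description precedes it below -/
import Mathlib

section
/- Let k ≥ 1, n ≥ 2k, Σ_k the set of k-sparse vectors of ℝⁿ, w a weight vector with w_i > 0 and max_i w_i = 1, R = ‖·‖_w, and H₀ a set of k indices carrying k largest weights of w. If ‖w_{H₀}‖₁ < ‖w_{H₀ᶜ}‖₁, then B_Σ(R) = sup_{z ∈ T_R(Σ_k)∖{0}} ‖z_{T₂ᶜ}‖₂²/‖z_{T₂}‖₂² = sup{ ‖z_{T₂ᶜ}‖₂²/‖z_{T₂}‖₂² : z ∈ ℝⁿ, z ≠ 0, ‖z_{H₀}‖_w = ‖z_{H₀ᶜ}‖_w }. -/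
/-!
A descent vector `z` at a `k`-sparse point supported in `S`, `|S| = k`, satisfies
`‖z_{Sᶜ}‖_w ≤ ‖z_S‖_w`. The permutation exchanging `S \ H₀` with `H₀ \ S` carries `S` onto `H₀`
without changing the ratio, and since `H₀` carries the largest weights the inequality survives
with `H₀` in place of `S`. Replacing every `|z i|` by `max |z i| t` keeps the top `2k` indices and
can only increase the ratio; as `‖w_{H₀}‖₁ < ‖w_{H₀ᶜ}‖₁`, the intermediate value theorem gives a
`t` that balances the two weighted masses. Conversely, a balanced `z` is a descent vector at the
`k`-sparse point `-z_{H₀}`.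
-/

open scoped BigOperators ENNReal RealInnerProductSpace
open MeasureTheory Metric

noncomputable section

/-- The set of `k`-sparse vectors of `ℝⁿ`. -/
def sparseVecs (n k : ℕ) : Set (EuclideanSpace ℝ (Fin n)) :=
  {x | ∃ s : Finset (Fin n), s.card ≤ k ∧ ∀ i ∉ s, x i = 0}

/-- Descent set (collection of descent vectors) of `R` at `x`. -/
def descentCone {n : ℕ} (R : EuclideanSpace ℝ (Fin n) → ℝ) (x : EuclideanSpace ℝ (Fin n)) :
    Set (EuclideanSpace ℝ (Fin n)) := {z | R (x + z) ≤ R x}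

/-- Descent vectors of `R` at the model set `S`. -/
def descentConeSet {n : ℕ} (R : EuclideanSpace ℝ (Fin n) → ℝ)
    (S : Set (EuclideanSpace ℝ (Fin n))) : Set (EuclideanSpace ℝ (Fin n)) :=
  ⋃ x ∈ S, descentCone R x

/-- Weighted ℓ¹-norm `‖z‖_w = ∑ i, w i * |z i|`. -/
def wNorm {n : ℕ} (w : Fin n → ℝ) (z : EuclideanSpace ℝ (Fin n)) : ℝ := ∑ i, w i * |z i|

/-- Restriction of a vector to a set of coordinates (`z_S`). -/
def coordRestrict {n : ℕ} (z : EuclideanSpace ℝ (Fin n)) (S : Finset (Fin n)) :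
    EuclideanSpace ℝ (Fin n) := WithLp.toLp 2 (fun i => if i ∈ S then z i else 0)

open Finset

section TopSets

variable {ι : Type*}

def IsTopSet {α : Type*} [LE α] (f : ι → α) (T : Finset ι) : Prop :=
  ∀ i ∈ T, ∀ j ∉ T, f j ≤ f i

theorem IsTopSet.map_equiv {α : Type*} [LE α] {f : ι → α} {T : Finset ι} (hT : IsTopSet f T)
    (σ : Equiv.Perm ι) : IsTopSet (f ∘ σ.symm) (T.map σ.toEmbedding) := by
  intro i hi j hj
  rw [mem_map_equiv] at hi hj
  exact hT _ hi _ hj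

variable [DecidableEq ι]

theorem IsTopSet.sum_eq {α M : Type*} [LinearOrder α] [AddCommMonoid M] {f : ι → α}
    {T T' : Finset ι} (hT : IsTopSet f T) (hT' : IsTopSet f T') (hcard : #T = #T')
    (F : ι → M) (hF : ∀ i j, f i = f j → F i = F j) :
    ∑ i ∈ T, F i = ∑ i ∈ T', F i := by
  let e := equivOfCardEq (card_sdiff_comm hcard)
  have hdiff : ∑ i ∈ T \ T', F i = ∑ i ∈ T' \ T, F i := by
    rw [← sum_coe_sort (T \ T'), ← sum_coe_sort (T' \ T)]
    refine Fintype.sum_equiv e _ _ fun i => hF _ _ (le_antisymm ?_ ?_)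
    · exact hT' _ (mem_sdiff.1 (e i).2).1 _ (mem_sdiff.1 i.2).2
    · exact hT _ (mem_sdiff.1 i.2).1 _ (mem_sdiff.1 (e i).2).2
  rw [← sum_inter_add_sum_sdiff T T', hdiff, inter_comm, sum_inter_add_sum_sdiff]

def swapAlong {s t : Finset ι} (e : s ≃ t) (i : ι) : ι :=
  if h : i ∈ s then e ⟨i, h⟩ else if h : i ∈ t then e.symm ⟨i, h⟩ else i

theorem swapAlong_involutive {s t : Finset ι} (hst : Disjoint s t) (e : s ≃ t) :
    Function.Involutive (swapAlong e) := by
  intro i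
  by_cases hs : i ∈ s
  · have ht : (e ⟨i, hs⟩ : ι) ∉ s := disjoint_right.1 hst (e ⟨i, hs⟩).2
    simp [swapAlong, hs, ht]
  · by_cases ht : i ∈ t <;> simp [swapAlong, hs, ht]

theorem IsTopSet.exists_perm {α : Type*} [LinearOrder α] {w : ι → α} {H S : Finset ι}
    (hH : IsTopSet w H) (hS : #S = #H) :
    ∃ σ : Equiv.Perm ι, (∀ i, i ∈ S ↔ σ i ∈ H) ∧ (∀ i ∈ S, w i ≤ w (σ i)) ∧
      ∀ i ∉ S, w (σ i) ≤ w i := by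
  let e := equivOfCardEq (card_sdiff_comm hS)
  let σ := (swapAlong_involutive disjoint_sdiff_sdiff e).toPerm
  have key : ∀ i, (i ∈ S → σ i ∈ H ∧ w i ≤ w (σ i)) ∧ (i ∉ S → σ i ∉ H ∧ w (σ i) ≤ w i) := by
    intro i
    by_cases hiS : i ∈ S <;> by_cases hiH : i ∈ H
    · simp [σ, swapAlong, hiS, hiH]
    · have h := mem_sdiff.1 (e ⟨i, mem_sdiff.2 ⟨hiS, hiH⟩⟩).2
      simp [σ, swapAlong, hiS, hiH, h.1, hH _ h.1 _ hiH]
    · have h := mem_sdiff.1 (e.symm ⟨i, mem_sdiff.2 ⟨hiH, hiS⟩⟩).2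
      simp [σ, swapAlong, hiS, hiH, h.2, hH _ hiH _ h.2]
    · simp [σ, swapAlong, hiS, hiH]
  refine ⟨σ, fun i => ⟨fun hi => ((key i).1 hi).1, fun hi => ?_⟩,
    fun i hi => ((key i).1 hi).2, fun i hi => ((key i).2 hi).2⟩
  by_contra hiS
  exact ((key i).2 hiS).1 hi

end TopSets

section TailRatio

variable {ι : Type*} [Fintype ι] [DecidableEq ι]

def tailRatio (v : ι → ℝ) (T : Finset ι) : ℝ := (∑ i ∈ Tᶜ, v i ^ 2) / ∑ i ∈ T, v i ^ 2

theorem tailRatio_nonneg (v : ι → ℝ) (T : Finset ι) : 0 ≤ tailRatio v T := by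
  unfold tailRatio; positivity

theorem tailRatio_congr {v : ι → ℝ} {T T' : Finset ι} (hT : IsTopSet (|v ·|) T)
    (hT' : IsTopSet (|v ·|) T') (hcard : #T = #T') : tailRatio v T = tailRatio v T' := by
  have htop := hT.sum_eq hT' hcard (v · ^ 2) fun i j hij => by rw [← sq_abs, hij, sq_abs]
  have htail : ∑ i ∈ Tᶜ, v i ^ 2 = ∑ i ∈ T'ᶜ, v i ^ 2 := by
    linarith [sum_compl_add_sum T (v · ^ 2), sum_compl_add_sum T' (v · ^ 2)]
  rw [tailRatio, tailRatio, htop, htail]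

theorem tailRatio_comp_symm (v : ι → ℝ) (T : Finset ι) (σ : Equiv.Perm ι) :
    tailRatio (v ∘ σ.symm) (T.map σ.toEmbedding) = tailRatio v T := by
  have h : ∀ s s' : Finset ι, (∀ i, i ∈ s ↔ σ i ∈ s') →
      ∑ i ∈ s', (v ∘ σ.symm) i ^ 2 = ∑ i ∈ s, v i ^ 2 := fun s s' hs =>
    (sum_equiv σ hs fun i _ => by simp).symm
  rw [tailRatio, tailRatio, h T (T.map σ.toEmbedding) (by simp),
    h Tᶜ (T.map σ.toEmbedding)ᶜ (by simp)]

theorem tailRatio_le_card {v : ι → ℝ} {T : Finset ι} (hT : IsTopSet (|v ·|) T)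
    (hne : T.Nonempty) : tailRatio v T ≤ Fintype.card ι := by
  obtain ⟨i₀, hi₀⟩ := hne
  have hle : ∀ j ∈ Tᶜ, v j ^ 2 ≤ ∑ i ∈ T, v i ^ 2 := fun j hj =>
    (sq_le_sq.2 (hT i₀ hi₀ j (mem_compl.1 hj))).trans
      (single_le_sum (fun i _ => sq_nonneg (v i)) hi₀)
  refine div_le_of_le_mul₀ (by positivity) (by positivity) ?_
  calc ∑ j ∈ Tᶜ, v j ^ 2 ≤ #Tᶜ • ∑ i ∈ T, v i ^ 2 := sum_le_card_nsmul _ _ _ hle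
    _ ≤ Fintype.card ι * ∑ i ∈ T, v i ^ 2 := by
      rw [nsmul_eq_mul]
      gcongr
      exact_mod_cast card_le_univ _

theorem mul_max_le_max_mul {a b : ℝ} (t : ℝ) (hb : 0 ≤ b) (hba : b ≤ a) :
    b * max a t ≤ max b t * a := by
  rcases le_total a t with hat | hat <;> rcases le_total b t with hbt | hbt <;>
    simp only [max_eq_left, max_eq_right, *] <;> nlinarith

theorem tailRatio_le_tailRatio_max {v : ι → ℝ} {T : Finset ι} (hT : IsTopSet (|v ·|) T)
    (t : ℝ) : tailRatio v T ≤ tailRatio (fun i => max |v i| t) T := by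
  set u := fun i => max |v i| t
  have hvu : ∀ i, v i ^ 2 ≤ u i ^ 2 := fun i => by
    rw [← sq_abs (v i)]
    exact pow_le_pow_left₀ (abs_nonneg _) (le_max_left _ _) 2
  rcases (sum_nonneg fun i (_ : i ∈ T) => sq_nonneg (v i)).eq_or_lt with h0 | hpos
  · rw [tailRatio, ← h0, div_zero]
    exact tailRatio_nonneg u T
  rw [tailRatio, tailRatio, div_le_div_iff₀ hpos (hpos.trans_le (sum_le_sum fun i _ => hvu i)),
    sum_mul_sum, sum_mul_sum]
  refine sum_le_sum fun j hj => sum_le_sum fun i hi => ?_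
  rw [← sq_abs (v j), ← sq_abs (v i), ← mul_pow, ← mul_pow]
  exact pow_le_pow_left₀ (by positivity)
    (mul_max_le_max_mul t (abs_nonneg _) (hT i hi j (mem_compl.1 hj))) 2

end TailRatio

theorem exists_sum_mul_max_eq {ι : Type*} [Fintype ι] [DecidableEq ι] {w a : ι → ℝ}
    {H : Finset ι} (ha : ∀ i, 0 ≤ a i) (hw : ∑ i ∈ H, w i < ∑ i ∈ Hᶜ, w i)
    (hwa : ∑ i ∈ Hᶜ, w i * a i ≤ ∑ i ∈ H, w i * a i) :
    ∃ t, 0 ≤ t ∧ ∑ i ∈ H, w i * max (a i) t = ∑ i ∈ Hᶜ, w i * max (a i) t := by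
  let φ : ℝ → ℝ := fun t => ∑ i ∈ H, w i * max (a i) t - ∑ i ∈ Hᶜ, w i * max (a i) t
  have hφ0 : 0 ≤ φ 0 := by simp only [φ, max_eq_left (ha _)]; linarith
  have hM : 0 ≤ ∑ i, a i := sum_nonneg fun i _ => ha i
  -- past the largest entry, `φ t` is `t` times the negative weight difference
  have hφM : φ (∑ i, a i) ≤ 0 := by
    have hmax : ∀ i, max (a i) (∑ j, a j) = ∑ j, a j := fun i =>
      max_eq_right (single_le_sum (fun j _ => ha j) (mem_univ i))
    simp only [φ, hmax, ← sum_mul, ← sub_mul]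
    exact mul_nonpos_of_nonpos_of_nonneg (by linarith) hM
  have hφ : Continuous φ := by fun_prop
  obtain ⟨t, ht, hφt⟩ := intermediate_value_Icc' hM hφ.continuousOn ⟨hφM, hφ0⟩
  exact ⟨t, ht.1, sub_eq_zero.1 hφt⟩

theorem exists_balanced_tailRatio_le {ι : Type*} [Fintype ι] [DecidableEq ι] {w v : ι → ℝ}
    {H S T : Finset ι} (hH : IsTopSet w H) (hw : ∑ i ∈ H, w i < ∑ i ∈ Hᶜ, w i) (hS : #S = #H)
    (hv : ∑ i ∈ Sᶜ, w i * |v i| ≤ ∑ i ∈ S, w i * |v i|) (hv0 : v ≠ 0)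
    (hT : IsTopSet (|v ·|) T) :
    ∃ u : ι → ℝ, u ≠ 0 ∧ ∑ i ∈ H, w i * |u i| = ∑ i ∈ Hᶜ, w i * |u i| ∧
      ∀ T', #T' = #T → IsTopSet (|u ·|) T' → tailRatio v T ≤ tailRatio u T' := by
  obtain ⟨σ, hσ, hσS, hσSc⟩ := hH.exists_perm hS
  set v' := v ∘ σ.symm
  have hsum : ∀ s s' : Finset ι, (∀ i, i ∈ s ↔ σ i ∈ s') →
      ∑ i ∈ s', w i * |v' i| = ∑ i ∈ s, w (σ i) * |v i| := fun s s' hs =>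
    (sum_equiv σ hs fun i _ => by simp [v']).symm
  have hv' : ∑ i ∈ Hᶜ, w i * |v' i| ≤ ∑ i ∈ H, w i * |v' i| := by
    rw [hsum S H hσ, hsum Sᶜ Hᶜ (by simp [hσ])]
    calc ∑ i ∈ Sᶜ, w (σ i) * |v i| ≤ ∑ i ∈ Sᶜ, w i * |v i| :=
          sum_le_sum fun i hi => by gcongr; exact hσSc i (mem_compl.1 hi)
      _ ≤ ∑ i ∈ S, w i * |v i| := hv
      _ ≤ ∑ i ∈ S, w (σ i) * |v i| := sum_le_sum fun i hi => by gcongr; exact hσS i hi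
  obtain ⟨t, ht, hbal⟩ := exists_sum_mul_max_eq (fun i => abs_nonneg (v' i)) hw hv'
  set u := fun i => max |v' i| t
  have habs : ∀ i, |u i| = u i := fun i => abs_of_nonneg ((abs_nonneg _).trans (le_max_left _ t))
  refine ⟨u, ?_, by simpa only [habs] using hbal, fun T' hT'card hT' => ?_⟩
  · obtain ⟨i, hi⟩ := Function.ne_iff.1 hv0
    refine Function.ne_iff.2 ⟨σ i, (lt_of_lt_of_le ?_ (le_max_left _ t)).ne'⟩
    simpa [v'] using hi
  have hTσ := hT.map_equiv σ
  have hTσu : IsTopSet (|u ·|) (T.map σ.toEmbedding) := fun i hi j hj => by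
    show |u j| ≤ |u i|
    rw [habs j, habs i]
    exact max_le_max_right t (hTσ i hi j hj)
  calc tailRatio v T = tailRatio v' (T.map σ.toEmbedding) := (tailRatio_comp_symm v T σ).symm
    _ ≤ tailRatio u (T.map σ.toEmbedding) := tailRatio_le_tailRatio_max hTσ t
    _ = tailRatio u T' := tailRatio_congr hTσu hT' (by rw [card_map, hT'card])

section Euclidean

variable {n : ℕ}

theorem norm_coordRestrict_sq (z : EuclideanSpace ℝ (Fin n)) (S : Finset (Fin n)) :
    ‖coordRestrict z S‖ ^ 2 = ∑ i ∈ S, z i ^ 2 := by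
  rw [EuclideanSpace.norm_eq, Real.sq_sqrt (by positivity)]
  simp [coordRestrict, apply_ite, sum_ite_mem]

theorem wNorm_coordRestrict (w : Fin n → ℝ) (z : EuclideanSpace ℝ (Fin n)) (S : Finset (Fin n)) :
    wNorm w (coordRestrict z S) = ∑ i ∈ S, w i * |z i| := by
  simp [wNorm, coordRestrict, apply_ite, sum_ite_mem]

theorem sum_compl_le_sum_of_mem_descentCone {w : Fin n → ℝ} (hw : ∀ i, 0 ≤ w i)
    {x z : EuclideanSpace ℝ (Fin n)} {S : Finset (Fin n)} (hx : ∀ i ∉ S, x i = 0)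
    (hz : z ∈ descentCone (wNorm w) x) :
    ∑ i ∈ Sᶜ, w i * |z i| ≤ ∑ i ∈ S, w i * |z i| := by
  have hz : wNorm w (x + z) ≤ wNorm w x := hz
  rw [wNorm, wNorm, ← sum_add_sum_compl S, ← sum_add_sum_compl S (fun i => w i * |x i|)] at hz
  have hxc : ∑ i ∈ Sᶜ, w i * |x i| = 0 :=
    sum_eq_zero fun i hi => by simp [hx i (mem_compl.1 hi)]
  have hxzc : ∑ i ∈ Sᶜ, w i * |(x + z) i| = ∑ i ∈ Sᶜ, w i * |z i| :=
    sum_congr rfl fun i hi => by simp [hx i (mem_compl.1 hi)]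
  have htri : ∑ i ∈ S, w i * |x i| ≤ ∑ i ∈ S, w i * |(x + z) i| + ∑ i ∈ S, w i * |z i| := by
    rw [← sum_add_distrib]
    refine sum_le_sum fun i _ => ?_
    rw [← mul_add]
    gcongr
    · exact hw i
    · simpa using abs_sub (x i + z i) (z i)
  linarith

theorem exists_card_eq_of_mem_descentConeSet {k : ℕ} (hkn : k ≤ n) {w : Fin n → ℝ}
    (hw : ∀ i, 0 ≤ w i) {z : EuclideanSpace ℝ (Fin n)}
    (hz : z ∈ descentConeSet (wNorm w) (sparseVecs n k)) :
    ∃ S : Finset (Fin n), #S = k ∧ ∑ i ∈ Sᶜ, w i * |z i| ≤ ∑ i ∈ S, w i * |z i| := by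
  obtain ⟨x, ⟨s, hs, hxs⟩, hz⟩ := Set.mem_iUnion₂.1 hz
  obtain ⟨S, hsS, hS⟩ := exists_superset_card_eq hs (by simpa using hkn)
  exact ⟨S, hS, sum_compl_le_sum_of_mem_descentCone hw (fun i hi => hxs i fun h => hi (hsS h)) hz⟩

theorem mem_descentConeSet_of_wNorm_le {k : ℕ} {w : Fin n → ℝ} {H : Finset (Fin n)}
    (hH : #H ≤ k) {z : EuclideanSpace ℝ (Fin n)}
    (hz : wNorm w (coordRestrict z Hᶜ) ≤ wNorm w (coordRestrict z H)) :
    z ∈ descentConeSet (wNorm w) (sparseVecs n k) := by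
  refine Set.mem_iUnion₂.2
    ⟨coordRestrict (-z) H, ⟨H, hH, fun i hi => by simp [coordRestrict, hi]⟩, ?_⟩
  have hadd : coordRestrict (-z) H + z = coordRestrict z Hᶜ := by
    ext i
    by_cases h : i ∈ H <;> simp [coordRestrict, h]
  show wNorm w (coordRestrict (-z) H + z) ≤ wNorm w (coordRestrict (-z) H)
  simpa [hadd, wNorm_coordRestrict] using hz

end Euclidean

theorem sSup_eq_of_subset_of_forall_le {α : Type*} {f : α → ℝ} {A B : Set α} (hf : ∀ a, 0 ≤ f a)
    (hbdd : BddAbove (Set.range f)) (hAB : A ⊆ B) (hBA : ∀ b ∈ B, ∃ a ∈ A, f b ≤ f a) :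
    sSup {r | ∃ b ∈ B, r = f b} = sSup {r | ∃ a ∈ A, r = f a} := by
  have hbdd' : ∀ C : Set α, BddAbove {r | ∃ c ∈ C, r = f c} := fun C =>
    hbdd.mono (by rintro _ ⟨c, -, rfl⟩; exact ⟨c, rfl⟩)
  have hnonneg : ∀ C : Set α, 0 ≤ sSup {r | ∃ c ∈ C, r = f c} := fun C =>
    Real.sSup_nonneg (by rintro _ ⟨c, -, rfl⟩; exact hf c)
  apply le_antisymm
  · refine Real.sSup_le ?_ (hnonneg A)
    rintro _ ⟨b, hb, rfl⟩
    obtain ⟨a, ha, hba⟩ := hBA b hb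
    exact hba.trans (le_csSup (hbdd' A) ⟨a, ha, rfl⟩)
  · refine Real.sSup_le ?_ (hnonneg B)
    rintro _ ⟨a, ha, rfl⟩
    exact le_csSup (hbdd' B) ⟨a, hAB ha, rfl⟩

theorem Bsigma_eq_sup_over_H0_eq_general
    (n k : ℕ) (hk : 1 ≤ k) (hn : 2 * k ≤ n)
    (w : Fin n → ℝ) (hpos : ∀ i, 0 < w i)
    (T₂ : EuclideanSpace ℝ (Fin n) → Finset (Fin n))
    (hT₂ : ∀ z, (T₂ z).card = 2 * k ∧ ∀ i ∈ T₂ z, ∀ j ∉ T₂ z, |z j| ≤ |z i|)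
    (H₀ : Finset (Fin n)) (hH₀card : H₀.card = k)
    (hH₀ : ∀ i ∈ H₀, ∀ j ∉ H₀, w j ≤ w i)
    (hw : ∑ i ∈ H₀, w i < ∑ i ∈ H₀ᶜ, w i) :
    sSup {r : ℝ | ∃ z ∈ descentConeSet (wNorm w) (sparseVecs n k) \ {0},
        r = ‖coordRestrict z (T₂ z)ᶜ‖ ^ 2 / ‖coordRestrict z (T₂ z)‖ ^ 2}
      = sSup {r : ℝ | ∃ z : EuclideanSpace ℝ (Fin n), z ≠ 0 ∧
          wNorm w (coordRestrict z H₀) = wNorm w (coordRestrict z H₀ᶜ) ∧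
          r = ‖coordRestrict z (T₂ z)ᶜ‖ ^ 2 / ‖coordRestrict z (T₂ z)‖ ^ 2} := by
  have hratio : ∀ z : EuclideanSpace ℝ (Fin n),
      ‖coordRestrict z (T₂ z)ᶜ‖ ^ 2 / ‖coordRestrict z (T₂ z)‖ ^ 2 = tailRatio z.ofLp (T₂ z) :=
    fun z => by rw [norm_coordRestrict_sq, norm_coordRestrict_sq]; rfl
  simp only [hratio]
  convert sSup_eq_of_subset_of_forall_le (f := fun z => tailRatio z.ofLp (T₂ z))
    (A := {z | z ≠ 0 ∧ wNorm w (coordRestrict z H₀) = wNorm w (coordRestrict z H₀ᶜ)})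
    (fun z => tailRatio_nonneg _ _) ⟨n, ?_⟩ ?_ ?_ using 4
  · exact exists_congr fun z => and_assoc.symm
  · rintro _ ⟨z, rfl⟩
    have hne : (T₂ z).Nonempty := by rw [← card_pos, (hT₂ z).1]; omega
    simpa using tailRatio_le_card (hT₂ z).2 hne
  · rintro z ⟨hz0, hbal⟩
    exact ⟨mem_descentConeSet_of_wNorm_le hH₀card.le hbal.ge, hz0⟩
  · rintro z ⟨hz, hz0⟩
    obtain ⟨S, hS, hSz⟩ :=
      exists_card_eq_of_mem_descentConeSet (by omega) (fun i => (hpos i).le) hz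
    obtain ⟨u, hu0, hubal, hu⟩ := exists_balanced_tailRatio_le hH₀ hw (hS.trans hH₀card.symm) hSz
      (fun h => hz0 (by simpa using congrArg (WithLp.toLp 2) h)) (hT₂ z).2
    refine ⟨WithLp.toLp 2 u, ⟨fun h => hu0 (congrArg WithLp.ofLp h), ?_⟩,
      hu _ ((hT₂ _).1.trans (hT₂ z).1.symm) (hT₂ _).2⟩
    simpa [wNorm_coordRestrict] using hubal

/-- Lemma 4 of the paper, under `‖w_{H₀}‖₁ < ‖w_{H₀ᶜ}‖₁` the supremum defining
`B_Σ(R)` is attained on the set where the weighted masses on `H₀` and `H₀ᶜ` are equal. -/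
theorem Bsigma_eq_sup_over_H0_eq
    (n k : ℕ) (hk : 1 ≤ k) (hn : 2 * k ≤ n)
    (w : Fin n → ℝ) (hpos : ∀ i, 0 < w i) (hle : ∀ i, w i ≤ 1) (hmax : ∃ i, w i = 1)
    (T₂ : EuclideanSpace ℝ (Fin n) → Finset (Fin n))
    (hT₂ : ∀ z, (T₂ z).card = 2 * k ∧ ∀ i ∈ T₂ z, ∀ j ∉ T₂ z, |z j| ≤ |z i|)
    (H₀ : Finset (Fin n)) (hH₀card : H₀.card = k)
    (hH₀ : ∀ i ∈ H₀, ∀ j ∉ H₀, w j ≤ w i)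
    (hw : ∑ i ∈ H₀, w i < ∑ i ∈ H₀ᶜ, w i) :
    sSup {r : ℝ | ∃ z ∈ descentConeSet (wNorm w) (sparseVecs n k) \ {0},
        r = ‖coordRestrict z (T₂ z)ᶜ‖ ^ 2 / ‖coordRestrict z (T₂ z)‖ ^ 2}
      = sSup {r : ℝ | ∃ z : EuclideanSpace ℝ (Fin n), z ≠ 0 ∧
          wNorm w (coordRestrict z H₀) = wNorm w (coordRestrict z H₀ᶜ) ∧
          r = ‖coordRestrict z (T₂ z)ᶜ‖ ^ 2 / ‖coordRestrict z (T₂ z)‖ ^ 2} :=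
  Bsigma_eq_sup_over_H0_eq_general n k hk hn w hpos T₂ hT₂ H₀ hH₀card hH₀ hw

end
end

section
/- Let 1 ≤ k ≤ n and let Σ_k be the set of k-sparse vectors of ℝⁿ. For every nonzero z ∈ ℝⁿ, sup_{x ∈ Σ_k∖{0}} ( −⟨x,z⟩ / ( ‖x‖₂ · √( ‖x+z‖_Σ² − ‖x‖₂² − 2⟨x,z⟩ ) ) ) = ( ‖z_{Tᶜ}‖_Σ²/‖z_T‖₂² + 1 )^{−1/2}, where for every x ∈ Σ_k∖{0} the quantity ‖x+z‖_Σ² − ‖x‖₂² − 2⟨x,z⟩ is positive. Consequently, for any norm R on ℝⁿ, the sufficient RIP constant δ_Σ^{suff}(R) = inf_{z ∈ T_R(Σ_k)∖{0}} sup_{x ∈ Σ_k∖{0}} ( −⟨x,z⟩ / ( ‖x‖₂ √( ‖x+z‖_Σ² − ‖x‖₂² − 2⟨x,z⟩ ) ) ) satisfies δ_Σ^{suff}(R) = 1/√( D_Σ(R) + 1 ) with D_Σ(R) := sup_{z ∈ T_R(Σ_k)∖{0}} ‖z_{Tᶜ}‖_Σ²/‖z_T‖₂². -/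
open scoped BigOperators ENNReal RealInnerProductSpace
open MeasureTheory Metric

noncomputable section

/-- Atomic norm `‖·‖_Σ` generated by the `k`-sparse unit vectors: the gauge of the convex hull
of `{u ∈ Σ_k : ‖u‖₂ = 1}`. -/
def atomNormSigma (n k : ℕ) (z : EuclideanSpace ℝ (Fin n)) : ℝ :=
  gauge (convexHull ℝ {u : EuclideanSpace ℝ (Fin n) | u ∈ sparseVecs n k ∧ ‖u‖ = 1}) z

/-!
`‖·‖_Σ` is the gauge of a convex, symmetric, absorbent set, hence a seminorm; it dominates `‖·‖₂`
and agrees with it on `Σ_k`. The key inequality is `‖v_S‖₂² + ‖v_{Sᶜ}‖_Σ² ≤ ‖v‖_Σ²` for every index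
set `S`: the square root of the left side is a seminorm bounded by `1` on the atoms, hence bounded
by the gauge of their convex hull. For `x` supported in `S` with `|S| = k`, applying it to `v = x + z`
and using Cauchy–Schwarz bounds the ratio by `c / √(c² + d²)` with `c = ‖z_S‖₂`, `d = ‖z_{Sᶜ}‖_Σ`.
A permutation exchanging `S \ T` with `T \ S` shows that passing from `S` to the top-`k` set `T`
increases `c` and decreases `d`, and `x = -z_T` attains the bound. The formula for `δ_Σ^{suff}(R)`
follows since `D ↦ 1 / √(D + 1)` is continuous and antitone.
-/

theorem sqrt_add_sq_add_add_sq_le (a b c d : ℝ) :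
    √((a + c) ^ 2 + (b + d) ^ 2) ≤ √(a ^ 2 + b ^ 2) + √(c ^ 2 + d ^ 2) := by
  have hcs : a * c + b * d ≤ √(a ^ 2 + b ^ 2) * √(c ^ 2 + d ^ 2) := by
    rw [← Real.sqrt_mul (by positivity)]
    exact Real.le_sqrt_of_sq_le (by nlinarith [sq_nonneg (a * d - b * c)])
  rw [Real.sqrt_le_left (by positivity)]
  nlinarith [Real.sq_sqrt (by positivity : 0 ≤ a ^ 2 + b ^ 2),
    Real.sq_sqrt (by positivity : 0 ≤ c ^ 2 + d ^ 2)]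

theorem div_sqrt_sq_add_sq_le {a b c d : ℝ} (ha : 0 < a) (hb : 0 ≤ b) (hc : 0 ≤ c)
    (hca : c ≤ a) (hbd : b ≤ d) : c / √(c ^ 2 + d ^ 2) ≤ a / √(a ^ 2 + b ^ 2) := by
  rcases hc.eq_or_lt with rfl | hc
  · simp only [zero_div]; positivity
  rw [div_le_div_iff₀ (by positivity) (by positivity),
    ← pow_le_pow_iff_left₀ (by positivity) (by positivity) two_ne_zero, mul_pow, mul_pow,
    Real.sq_sqrt (by positivity), Real.sq_sqrt (by positivity)]
  have := mul_le_mul hca hbd hb ha.le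
  nlinarith [mul_nonneg hc.le hb]

theorem div_sqrt_sq_add_sq_eq {a : ℝ} (ha : 0 < a) (b : ℝ) :
    a / √(a ^ 2 + b ^ 2) = 1 / √(b ^ 2 / a ^ 2 + 1) := by
  rw [show b ^ 2 / a ^ 2 + 1 = (a ^ 2 + b ^ 2) / a ^ 2 by field_simp; ring,
    Real.sqrt_div' _ (by positivity), Real.sqrt_sq ha.le, one_div_div]

theorem sInf_eq_one_div_sqrt_sSup_add_one {ι : Type*} {Z : Set ι} (F D : ι → ℝ)
    (hF : ∀ z ∈ Z, F z = 1 / √(D z + 1)) (hZ : Z.Nonempty) (hD : ∀ z ∈ Z, 0 ≤ D z)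
    (hbdd : BddAbove {d | ∃ z ∈ Z, d = D z}) :
    sInf {s | ∃ z ∈ Z, s = F z} = 1 / √(sSup {d | ∃ z ∈ Z, d = D z} + 1) := by
  set A := {d | ∃ z ∈ Z, d = D z}
  have hA : A.Nonempty := ⟨D hZ.some, hZ.some, hZ.some_mem, rfl⟩
  have hA0 : ∀ d ∈ A, 0 ≤ d := by rintro d ⟨z, hz, rfl⟩; exact hD z hz
  have himage : {s | ∃ z ∈ Z, s = F z} = (fun d => 1 / √(d + 1)) '' A := by
    ext s
    constructor
    · rintro ⟨z, hz, rfl⟩; exact ⟨D z, ⟨z, hz, rfl⟩, (hF z hz).symm⟩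
    · rintro ⟨d, ⟨z, hz, rfl⟩, rfl⟩; exact ⟨z, hz, (hF z hz).symm⟩
  have hsSup : 0 ≤ sSup A := (hA0 _ hA.some_mem).trans (le_csSup hbdd hA.some_mem)
  rw [himage]
  refine (AntitoneOn.map_csSup_of_continuousWithinAt ?_ ?_ hA hbdd).symm
  · refine (continuousAt_const.div (by fun_prop) ?_).continuousWithinAt
    exact (Real.sqrt_pos.2 (by linarith)).ne'
  · intro d₁ h₁ d₂ _ h
    have : 0 < √(d₁ + 1) := Real.sqrt_pos.2 (by linarith [hA0 d₁ h₁])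
    dsimp only
    gcongr

namespace Seminorm

variable {E : Type*} [AddCommGroup E] [Module ℝ E]

def hypot (p q : Seminorm ℝ E) : Seminorm ℝ E :=
  Seminorm.of (fun x => √(p x ^ 2 + q x ^ 2))
    (fun x y => by
      refine (Real.sqrt_le_sqrt ?_).trans (sqrt_add_sq_add_add_sq_le _ _ _ _)
      gcongr <;> first | exact apply_nonneg _ _ | exact map_add_le_add _ _ _)
    (fun a x => by
      rw [map_smul_eq_mul, map_smul_eq_mul, mul_pow, mul_pow, ← mul_add,
        Real.sqrt_mul (sq_nonneg _), Real.sqrt_sq (norm_nonneg _)])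

theorem le_gauge_convexHull (p : Seminorm ℝ E) {A : Set E} (hA : Absorbent ℝ (convexHull ℝ A))
    (hp : ∀ a ∈ A, p a ≤ 1) (x : E) : p x ≤ gauge (convexHull ℝ A) x := by
  have hball : convexHull ℝ A ⊆ p.closedBall 0 1 :=
    convexHull_min (fun a ha => p.mem_closedBall_zero.2 (hp a ha)) (p.convex_closedBall 0 1)
  rw [gauge]
  refine le_csInf hA.gauge_set_nonempty ?_
  rintro r ⟨hr, y, hy, rfl⟩
  rw [map_smul_eq_mul, Real.norm_eq_abs, abs_of_pos hr]
  exact mul_le_of_le_one_right hr.le (p.mem_closedBall_zero.1 (hball hy))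

end Seminorm

section

open Finset

variable {n k : ℕ}

@[simp]
theorem coordRestrict_apply (z : EuclideanSpace ℝ (Fin n)) (S : Finset (Fin n)) (i : Fin n) :
    coordRestrict z S i = if i ∈ S then z i else 0 := rfl

def coordRestrictₗ (S : Finset (Fin n)) :
    EuclideanSpace ℝ (Fin n) →ₗ[ℝ] EuclideanSpace ℝ (Fin n) where
  toFun z := coordRestrict z S
  map_add' x y := by ext i; by_cases hi : i ∈ S <;> simp [hi]
  map_smul' c x := by ext i; by_cases hi : i ∈ S <;> simp [hi]

@[simp]
theorem coordRestrictₗ_apply (S : Finset (Fin n)) (z : EuclideanSpace ℝ (Fin n)) :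
    coordRestrictₗ S z = coordRestrict z S := rfl

theorem coordRestrict_add_coordRestrict_compl (z : EuclideanSpace ℝ (Fin n)) (S : Finset (Fin n)) :
    coordRestrict z S + coordRestrict z Sᶜ = z := by
  ext i; by_cases hi : i ∈ S <;> simp [hi]

theorem norm_sq_coordRestrict_add_norm_sq_coordRestrict_compl (z : EuclideanSpace ℝ (Fin n))
    (S : Finset (Fin n)) : ‖coordRestrict z S‖ ^ 2 + ‖coordRestrict z Sᶜ‖ ^ 2 = ‖z‖ ^ 2 := by
  simp only [EuclideanSpace.norm_sq_eq, ← sum_add_distrib]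
  exact sum_congr rfl fun i _ => by by_cases hi : i ∈ S <;> simp [hi]

theorem coordRestrict_eq_self {x : EuclideanSpace ℝ (Fin n)} {S : Finset (Fin n)}
    (hx : ∀ i ∉ S, x i = 0) : coordRestrict x S = x := by
  ext i; by_cases hi : i ∈ S <;> simp [hi, hx]

theorem coordRestrict_compl_eq_zero {x : EuclideanSpace ℝ (Fin n)} {S : Finset (Fin n)}
    (hx : ∀ i ∉ S, x i = 0) : coordRestrict x Sᶜ = 0 := by
  ext i; by_cases hi : i ∈ S <;> simp [hi, hx]

theorem inner_coordRestrict_right_of_support {x : EuclideanSpace ℝ (Fin n)} {S : Finset (Fin n)}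
    (hx : ∀ i ∉ S, x i = 0) (z : EuclideanSpace ℝ (Fin n)) : ⟪x, coordRestrict z S⟫ = ⟪x, z⟫ := by
  simp only [PiLp.inner_apply]
  exact sum_congr rfl fun i _ => by by_cases hi : i ∈ S <;> simp [hi, hx]

theorem inner_coordRestrict_left_self (z : EuclideanSpace ℝ (Fin n)) (S : Finset (Fin n)) :
    ⟪coordRestrict z S, z⟫ = ‖coordRestrict z S‖ ^ 2 := by
  rw [← inner_coordRestrict_right_of_support (S := S) (fun i hi => by simp [hi]) z,
    real_inner_self_eq_norm_sq]

theorem coordRestrict_mem_sparseVecs {z : EuclideanSpace ℝ (Fin n)} (hz : z ∈ sparseVecs n k)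
    (S : Finset (Fin n)) : coordRestrict z S ∈ sparseVecs n k := by
  obtain ⟨s, hs, hzs⟩ := hz
  exact ⟨s, hs, fun i hi => by simp [hzs i hi]⟩

theorem coordRestrict_mem_sparseVecs_of_card_le (z : EuclideanSpace ℝ (Fin n))
    {S : Finset (Fin n)} (hS : #S ≤ k) : coordRestrict z S ∈ sparseVecs n k :=
  ⟨S, hS, fun i hi => by simp [hi]⟩

theorem smul_mem_sparseVecs (c : ℝ) {z : EuclideanSpace ℝ (Fin n)} (hz : z ∈ sparseVecs n k) :
    c • z ∈ sparseVecs n k := by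
  obtain ⟨s, hs, hzs⟩ := hz
  exact ⟨s, hs, fun i hi => by simp [hzs i hi]⟩

theorem neg_mem_sparseVecs {z : EuclideanSpace ℝ (Fin n)} (hz : z ∈ sparseVecs n k) :
    -z ∈ sparseVecs n k := by
  simpa using smul_mem_sparseVecs (-1) hz

theorem single_mem_sparseVecs (hk : 0 < k) (i : Fin n) (a : ℝ) :
    EuclideanSpace.single i a ∈ sparseVecs n k :=
  ⟨{i}, (card_singleton i).trans_le hk, fun j hj => by simp_all⟩

def sparseAtoms (n k : ℕ) : Set (EuclideanSpace ℝ (Fin n)) :=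
  {u | u ∈ sparseVecs n k ∧ ‖u‖ = 1}

theorem atomNormSigma_nonneg (v : EuclideanSpace ℝ (Fin n)) : 0 ≤ atomNormSigma n k v :=
  gauge_nonneg v

theorem inv_norm_smul_mem_sparseAtoms {u : EuclideanSpace ℝ (Fin n)} (hu : u ∈ sparseVecs n k)
    (hu0 : u ≠ 0) : ‖u‖⁻¹ • u ∈ sparseAtoms n k :=
  ⟨smul_mem_sparseVecs _ hu, norm_smul_inv_norm hu0⟩

theorem neg_sparseAtoms : -sparseAtoms n k = sparseAtoms n k := by
  ext u
  simp only [Set.mem_neg, sparseAtoms, Set.mem_ofPred_eq, norm_neg]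
  exact and_congr_left' ⟨fun h => by simpa using neg_mem_sparseVecs h, neg_mem_sparseVecs⟩

theorem neg_mem_convexHull_sparseAtoms {v : EuclideanSpace ℝ (Fin n)}
    (hv : v ∈ convexHull ℝ (sparseAtoms n k)) : -v ∈ convexHull ℝ (sparseAtoms n k) := by
  rw [← neg_sparseAtoms, convexHull_neg]
  exact Set.neg_mem_neg.2 hv

theorem zero_mem_convexHull_sparseAtoms (hk : 0 < k) (hn : 0 < n) :
    (0 : EuclideanSpace ℝ (Fin n)) ∈ convexHull ℝ (sparseAtoms n k) := by
  have he : EuclideanSpace.single ⟨0, hn⟩ (1 : ℝ) ∈ convexHull ℝ (sparseAtoms n k) :=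
    subset_convexHull ℝ _ ⟨single_mem_sparseVecs hk _ _, by simp⟩
  simpa using convex_convexHull ℝ _ he (neg_mem_convexHull_sparseAtoms he)
    (by norm_num : (0 : ℝ) ≤ 1 / 2) (by norm_num : (0 : ℝ) ≤ 1 / 2) (by norm_num)

theorem mem_convexHull_sparseAtoms (hk : 0 < k) (hn : 0 < n) {u : EuclideanSpace ℝ (Fin n)}
    (hu : u ∈ sparseVecs n k) (hu1 : ‖u‖ ≤ 1) : u ∈ convexHull ℝ (sparseAtoms n k) := by
  rcases eq_or_ne u 0 with rfl | hu0
  · exact zero_mem_convexHull_sparseAtoms hk hn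
  rw [← smul_inv_smul₀ (norm_ne_zero_iff.2 hu0) u]
  exact (convex_convexHull ℝ _).smul_mem_of_zero_mem (zero_mem_convexHull_sparseAtoms hk hn)
    (subset_convexHull ℝ _ (inv_norm_smul_mem_sparseAtoms hu hu0)) ⟨norm_nonneg _, hu1⟩

theorem closedBall_subset_convexHull_sparseAtoms (hk : 0 < k) (hn : 0 < n) :
    closedBall (0 : EuclideanSpace ℝ (Fin n)) (n : ℝ)⁻¹ ⊆ convexHull ℝ (sparseAtoms n k) := by
  intro y hy
  -- `y` is the average of the `1`-sparse vectors `n • y i • eᵢ`, each of norm at most `1`.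
  have hn' : (n : ℝ) ≠ 0 := by positivity
  have hsum : y = ∑ i, (n : ℝ)⁻¹ • ((n : ℝ) • EuclideanSpace.single i (y i)) := by
    simp_rw [smul_smul, inv_mul_cancel₀ hn', one_smul]
    ext j
    simp [Pi.single_apply]
  rw [hsum]
  refine (convex_convexHull ℝ _).sum_mem (fun _ _ => by positivity) ?_ fun i _ => ?_
  · simp [mul_inv_cancel₀ hn']
  refine mem_convexHull_sparseAtoms hk hn (smul_mem_sparseVecs _ (single_mem_sparseVecs hk _ _)) ?_
  calc ‖(n : ℝ) • EuclideanSpace.single i (y i)‖ = n * ‖y i‖ := by simp [norm_smul]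
    _ ≤ n * (n : ℝ)⁻¹ := by
      gcongr
      exact (PiLp.norm_apply_le y i).trans (mem_closedBall_zero_iff.1 hy)
    _ = 1 := mul_inv_cancel₀ hn'

theorem absorbent_convexHull_sparseAtoms (hk : 0 < k) (hn : 0 < n) :
    Absorbent ℝ (convexHull ℝ (sparseAtoms n k)) :=
  absorbent_nhds_zero <| Filter.mem_of_superset (closedBall_mem_nhds _ (by positivity))
    (closedBall_subset_convexHull_sparseAtoms hk hn)

theorem balanced_convexHull_sparseAtoms : Balanced ℝ (convexHull ℝ (sparseAtoms n k)) :=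
  (balanced_iff_neg_mem (convex_convexHull ℝ _)).2 fun _ => neg_mem_convexHull_sparseAtoms

def atomSeminorm (hk : 0 < k) (hn : 0 < n) : Seminorm ℝ (EuclideanSpace ℝ (Fin n)) :=
  gaugeSeminorm balanced_convexHull_sparseAtoms (convex_convexHull ℝ _)
    (absorbent_convexHull_sparseAtoms hk hn)

theorem atomNormSigma_le_norm {u : EuclideanSpace ℝ (Fin n)} (hu : u ∈ sparseVecs n k) :
    atomNormSigma n k u ≤ ‖u‖ := by
  rcases eq_or_ne u 0 with rfl | hu0
  · simp [atomNormSigma]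
  refine gauge_le_of_mem (norm_nonneg u) ?_
  have := Set.smul_mem_smul_set (a := ‖u‖)
    (subset_convexHull ℝ _ (inv_norm_smul_mem_sparseAtoms hu hu0))
  rwa [smul_inv_smul₀ (norm_ne_zero_iff.2 hu0)] at this

theorem norm_le_atomNormSigma (hk : 0 < k) (hn : 0 < n) (v : EuclideanSpace ℝ (Fin n)) :
    ‖v‖ ≤ atomNormSigma n k v :=
  (normSeminorm ℝ _).le_gauge_convexHull (absorbent_convexHull_sparseAtoms hk hn)
    (fun _ ha => ha.2.le) v

theorem atomNormSigma_le_mul_norm (hk : 0 < k) (hn : 0 < n) (v : EuclideanSpace ℝ (Fin n)) :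
    atomNormSigma n k v ≤ n * ‖v‖ := by
  have := gauge_mono (absorbent_nhds_zero (closedBall_mem_nhds _ (by positivity)))
    (closedBall_subset_convexHull_sparseAtoms hk hn) v
  rwa [gauge_closedBall (by positivity), div_inv_eq_mul, mul_comm] at this

theorem sq_norm_coordRestrict_add_sq_atomNormSigma_compl_le (hk : 0 < k) (hn : 0 < n)
    (S : Finset (Fin n)) (v : EuclideanSpace ℝ (Fin n)) :
    ‖coordRestrict v S‖ ^ 2 + atomNormSigma n k (coordRestrict v Sᶜ) ^ 2 ≤
      atomNormSigma n k v ^ 2 := by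
  set N := ((normSeminorm ℝ _).comp (coordRestrictₗ S)).hypot
    ((atomSeminorm hk hn).comp (coordRestrictₗ Sᶜ))
  have hN : N v ≤ atomNormSigma n k v := by
    refine N.le_gauge_convexHull (absorbent_convexHull_sparseAtoms hk hn) (fun u hu => ?_) v
    have hSc := atomNormSigma_le_norm (coordRestrict_mem_sparseVecs hu.1 Sᶜ)
    calc N u = √(‖coordRestrict u S‖ ^ 2 + atomNormSigma n k (coordRestrict u Sᶜ) ^ 2) := rfl
      _ ≤ √(‖coordRestrict u S‖ ^ 2 + ‖coordRestrict u Sᶜ‖ ^ 2) :=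
        Real.sqrt_le_sqrt (add_le_add_right (pow_le_pow_left₀ (atomNormSigma_nonneg _) hSc 2) _)
      _ = 1 := by
        rw [norm_sq_coordRestrict_add_norm_sq_coordRestrict_compl, hu.2, one_pow, Real.sqrt_one]
  exact (Real.sqrt_le_left (atomNormSigma_nonneg v)).1 hN

theorem norm_le_norm_of_abs_le_comp_perm {ι : Type*} [Fintype ι] {u w : EuclideanSpace ℝ ι}
    (π : Equiv.Perm ι) (h : ∀ l, |u l| ≤ |w (π l)|) : ‖u‖ ≤ ‖w‖ := by
  rw [← pow_le_pow_iff_left₀ (norm_nonneg _) (norm_nonneg _) two_ne_zero,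
    EuclideanSpace.norm_sq_eq, EuclideanSpace.norm_sq_eq, ← Equiv.sum_comp π (fun l => ‖w l‖ ^ 2)]
  exact sum_le_sum fun l _ => pow_le_pow_left₀ (norm_nonneg _) (h l) 2

def permScaleₗ (d : Fin n → ℝ) (π : Equiv.Perm (Fin n)) :
    EuclideanSpace ℝ (Fin n) →ₗ[ℝ] EuclideanSpace ℝ (Fin n) where
  toFun v := WithLp.toLp 2 fun l => d l * v (π l)
  map_add' x y := by ext l; simp [mul_add]
  map_smul' c x := by ext l; simp only [PiLp.smul_apply, smul_eq_mul,
    RingHom.id_apply]; ring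

theorem atomNormSigma_permScaleₗ_le (hk : 0 < k) (hn : 0 < n) {d : Fin n → ℝ}
    (hd : ∀ l, |d l| ≤ 1) (π : Equiv.Perm (Fin n)) (v : EuclideanSpace ℝ (Fin n)) :
    atomNormSigma n k (permScaleₗ d π v) ≤ atomNormSigma n k v := by
  refine ((atomSeminorm hk hn).comp (permScaleₗ d π)).le_gauge_convexHull
    (absorbent_convexHull_sparseAtoms hk hn) (fun a ha => ?_) v
  obtain ⟨⟨s, hs, has⟩, ha1⟩ := ha
  have hsparse : permScaleₗ d π a ∈ sparseVecs n k := by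
    refine ⟨s.image π.symm, card_image_le.trans hs, fun l hl => ?_⟩
    have : π l ∉ s := fun h => hl (mem_image.2 ⟨π l, h, by simp⟩)
    simp [permScaleₗ, has _ this]
  refine (atomNormSigma_le_norm hsparse).trans
    ((norm_le_norm_of_abs_le_comp_perm π fun l => ?_).trans ha1.le)
  simp only [permScaleₗ, LinearMap.coe_mk, AddHom.coe_mk, PiLp.toLp_apply, abs_mul]
  exact mul_le_of_le_one_left (abs_nonneg _) (hd l)

theorem atomNormSigma_le_of_abs_le_comp_perm (hk : 0 < k) (hn : 0 < n) (π : Equiv.Perm (Fin n))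
    {u w : EuclideanSpace ℝ (Fin n)} (h : ∀ l, |u l| ≤ |w (π l)|) :
    atomNormSigma n k u ≤ atomNormSigma n k w := by
  -- `u l / 0 = 0` is harmless: `h` forces `u l = 0` wherever `w (π l) = 0`.
  have hw : permScaleₗ (fun l => u l / w (π l)) π w = u := by
    ext l
    refine div_mul_cancel_of_imp fun h0 => ?_
    simpa [h0] using h l
  rw [← hw]
  exact atomNormSigma_permScaleₗ_le hk hn
    (fun l => by rw [abs_div]; exact div_le_one_of_le₀ (h l) (abs_nonneg _)) π w

theorem exists_perm_mapsTo_sdiff {α : Type*} [Finite α] [DecidableEq α] {S T : Finset α}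
    (h : #S = #T) :
    ∃ π : Equiv.Perm α, (∀ l ∈ S \ T, π l ∈ T \ S) ∧ ∀ l, (l ∈ S ↔ l ∈ T) → π l = l := by
  let e : ↥(S \ T) ≃ ↥(T \ S) := equivOfCardEq (card_sdiff_comm h)
  let g : {l // l ∈ S \ T ∨ (l ∈ S ↔ l ∈ T)} → α := fun l =>
    if hl : (l : α) ∈ S \ T then e ⟨l, hl⟩ else l
  have hg : Function.Injective g := by
    have hout : ∀ a (ha : a ∈ S \ T) b, b ∉ S \ T → (b ∈ S \ T ∨ (b ∈ S ↔ b ∈ T)) →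
        (e ⟨a, ha⟩ : α) ≠ b := by
      intro a ha b hb hb' hab
      have := (e ⟨a, ha⟩).2
      rw [hab] at this
      simp only [mem_sdiff] at this hb'
      tauto
    rintro ⟨a, ha⟩ ⟨b, hb⟩ hab
    simp only [g] at hab
    split_ifs at hab with h1 h2 h2
    · simpa using e.injective (Subtype.ext hab)
    · exact absurd hab (hout a h1 b h2 hb)
    · exact absurd hab.symm (hout b h2 a h1 ha)
    · exact Subtype.ext hab
  obtain ⟨π, hπ⟩ := Equiv.Perm.exists_extending_pair Subtype.val g Subtype.val_injective hg
  refine ⟨π, fun l hl => ?_, fun l hl => ?_⟩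
  · rw [hπ ⟨l, Or.inl hl⟩]
    simp only [g, dif_pos hl]
    exact (e ⟨l, hl⟩).2
  · have hl' : l ∉ S \ T := by rw [mem_sdiff]; tauto
    rw [hπ ⟨l, Or.inr hl⟩]
    simp only [g, dif_neg hl']

def IsTopCoords (z : EuclideanSpace ℝ (Fin n)) (T : Finset (Fin n)) : Prop :=
  ∀ i ∈ T, ∀ j ∉ T, |z j| ≤ |z i|

namespace IsTopCoords

variable {z : EuclideanSpace ℝ (Fin n)} {S T : Finset (Fin n)}

theorem exists_perm_abs_le (hT : IsTopCoords z T) (hST : #S = #T) :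
    ∃ π : Equiv.Perm (Fin n), (∀ l, |coordRestrict z S l| ≤ |coordRestrict z T (π l)|) ∧
      ∀ l, |coordRestrict z Tᶜ l| ≤ |coordRestrict z Sᶜ (π l)| := by
  obtain ⟨π, hmaps, hfix⟩ := exists_perm_mapsTo_sdiff hST
  refine ⟨π, fun l => ?_, fun l => ?_⟩ <;> by_cases hlS : l ∈ S <;> by_cases hlT : l ∈ T
  · simp [hfix l (iff_of_true hlS hlT), hlS, hlT]
  · have := mem_sdiff.1 (hmaps l (mem_sdiff.2 ⟨hlS, hlT⟩))
    simpa [hlS, this.1] using hT _ this.1 l hlT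
  · simp [hlS]
  · simp [hlS]
  · simp [hlT]
  · have := mem_sdiff.1 (hmaps l (mem_sdiff.2 ⟨hlS, hlT⟩))
    simpa [hlT, this.2] using hT _ this.1 l hlT
  · simp [hlT]
  · simp [hfix l (iff_of_false hlS hlT), hlS, hlT]

theorem norm_coordRestrict_le (hT : IsTopCoords z T) (hST : #S = #T) :
    ‖coordRestrict z S‖ ≤ ‖coordRestrict z T‖ :=
  let ⟨π, h, _⟩ := hT.exists_perm_abs_le hST
  norm_le_norm_of_abs_le_comp_perm π h

theorem atomNormSigma_coordRestrict_compl_le (hk : 0 < k) (hn : 0 < n) (hT : IsTopCoords z T)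
    (hST : #S = #T) :
    atomNormSigma n k (coordRestrict z Tᶜ) ≤ atomNormSigma n k (coordRestrict z Sᶜ) :=
  let ⟨π, _, h⟩ := hT.exists_perm_abs_le hST
  atomNormSigma_le_of_abs_le_comp_perm hk hn π h

theorem abs_le_norm_coordRestrict (hT : IsTopCoords z T) (hTne : T.Nonempty) (j : Fin n) :
    |z j| ≤ ‖coordRestrict z T‖ := by
  have hle : ∀ i ∈ T, |z i| ≤ ‖coordRestrict z T‖ := fun i hi => by
    simpa [hi] using PiLp.norm_apply_le (coordRestrict z T) i
  by_cases hj : j ∈ T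
  · exact hle j hj
  · obtain ⟨i, hi⟩ := hTne
    exact (hT i hi j hj).trans (hle i hi)

theorem norm_coordRestrict_pos (hT : IsTopCoords z T) (hTne : T.Nonempty) (hz : z ≠ 0) :
    0 < ‖coordRestrict z T‖ := by
  refine (norm_nonneg _).lt_of_ne' fun h0 => hz ?_
  ext j
  simpa [h0] using hT.abs_le_norm_coordRestrict hTne j

theorem norm_sq_le (hT : IsTopCoords z T) (hTne : T.Nonempty) :
    ‖z‖ ^ 2 ≤ n * ‖coordRestrict z T‖ ^ 2 := by
  rw [EuclideanSpace.norm_sq_eq]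
  calc ∑ j, ‖z j‖ ^ 2 ≤ ∑ _j : Fin n, ‖coordRestrict z T‖ ^ 2 :=
        sum_le_sum fun j _ =>
          pow_le_pow_left₀ (norm_nonneg _) (hT.abs_le_norm_coordRestrict hTne j) 2
    _ = n * ‖coordRestrict z T‖ ^ 2 := by simp

theorem sq_atomNormSigma_div_sq_norm_le (hk : 0 < k) (hn : 0 < n) (hT : IsTopCoords z T)
    (hTne : T.Nonempty) (hz : z ≠ 0) :
    atomNormSigma n k (coordRestrict z Tᶜ) ^ 2 / ‖coordRestrict z T‖ ^ 2 ≤ (n : ℝ) ^ 3 := by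
  have hpyth := norm_sq_coordRestrict_add_norm_sq_coordRestrict_compl z T
  have hg := pow_le_pow_left₀ (atomNormSigma_nonneg _)
    (atomNormSigma_le_mul_norm (k := k) hk hn (coordRestrict z Tᶜ)) 2
  rw [div_le_iff₀ (pow_pos (hT.norm_coordRestrict_pos hTne hz) 2)]
  calc atomNormSigma n k (coordRestrict z Tᶜ) ^ 2 ≤ n ^ 2 * ‖coordRestrict z Tᶜ‖ ^ 2 := by
        rwa [mul_pow] at hg
    _ ≤ n ^ 2 * ‖z‖ ^ 2 := by gcongr ?_ * ?_; nlinarith [sq_nonneg ‖coordRestrict z T‖]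
    _ ≤ n ^ 2 * (n * ‖coordRestrict z T‖ ^ 2) := by gcongr; exact hT.norm_sq_le hTne
    _ = n ^ 3 * ‖coordRestrict z T‖ ^ 2 := by ring

end IsTopCoords

def deltaSuffGap (n k : ℕ) (x z : EuclideanSpace ℝ (Fin n)) : ℝ :=
  atomNormSigma n k (x + z) ^ 2 - ‖x‖ ^ 2 - 2 * ⟪x, z⟫

def deltaSuffRatio (n k : ℕ) (x z : EuclideanSpace ℝ (Fin n)) : ℝ :=
  -⟪x, z⟫ / (‖x‖ * √(deltaSuffGap n k x z))

theorem sq_norm_coordRestrict_add_sq_atomNormSigma_compl_le_deltaSuffGap (hk : 0 < k) (hn : 0 < n)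
    {x : EuclideanSpace ℝ (Fin n)} {S : Finset (Fin n)} (hx : ∀ i ∉ S, x i = 0)
    (z : EuclideanSpace ℝ (Fin n)) :
    ‖coordRestrict z S‖ ^ 2 + atomNormSigma n k (coordRestrict z Sᶜ) ^ 2 ≤ deltaSuffGap n k x z := by
  have h := sq_norm_coordRestrict_add_sq_atomNormSigma_compl_le hk hn S (x + z)
  have hS : coordRestrict (x + z) S = x + coordRestrict z S := by
    rw [← coordRestrictₗ_apply, map_add, coordRestrictₗ_apply, coordRestrict_eq_self hx,
      coordRestrictₗ_apply]
  have hSc : coordRestrict (x + z) Sᶜ = coordRestrict z Sᶜ := by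
    rw [← coordRestrictₗ_apply, map_add, coordRestrictₗ_apply, coordRestrict_compl_eq_zero hx,
      zero_add, coordRestrictₗ_apply]
  rw [hS, hSc, norm_add_sq_real, inner_coordRestrict_right_of_support hx] at h
  unfold deltaSuffGap
  linarith

theorem deltaSuffGap_pos (hk : 0 < k) (hn : 0 < n) {x z : EuclideanSpace ℝ (Fin n)}
    (hx : x ∈ sparseVecs n k) (hz : z ≠ 0) : 0 < deltaSuffGap n k x z := by
  obtain ⟨s, -, hxs⟩ := hx
  have hgap := sq_norm_coordRestrict_add_sq_atomNormSigma_compl_le_deltaSuffGap hk hn hxs z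
  have hsc := pow_le_pow_left₀ (norm_nonneg _) (norm_le_atomNormSigma hk hn (coordRestrict z sᶜ)) 2
  have hpyth := norm_sq_coordRestrict_add_norm_sq_coordRestrict_compl z s
  have hz2 := pow_pos (norm_pos_iff.2 hz) 2
  linarith

theorem deltaSuffRatio_le (hk : 0 < k) (hkn : k ≤ n) {z : EuclideanSpace ℝ (Fin n)}
    {T : Finset (Fin n)} (hT : IsTopCoords z T) (hTk : #T = k) {x : EuclideanSpace ℝ (Fin n)}
    (hx : x ∈ sparseVecs n k) :
    deltaSuffRatio n k x z ≤ ‖coordRestrict z T‖ /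
      √(‖coordRestrict z T‖ ^ 2 + atomNormSigma n k (coordRestrict z Tᶜ) ^ 2) := by
  have hn : 0 < n := hk.trans_le hkn
  rcases le_or_gt (-⟪x, z⟫) 0 with hneg | hpos
  · exact (div_nonpos_of_nonpos_of_nonneg hneg (by positivity)).trans (by positivity)
  obtain ⟨s, hs, hxs⟩ := hx
  obtain ⟨S, hsS, -, hSk⟩ := exists_subsuperset_card_eq (subset_univ s) hs (by simpa using hkn)
  have hxS : ∀ i ∉ S, x i = 0 := fun i hi => hxs i fun h => hi (hsS h)
  have hST : #S = #T := hSk.trans hTk.symm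
  set c := ‖coordRestrict z S‖
  set d := atomNormSigma n k (coordRestrict z Sᶜ)
  have hxc : -⟪x, z⟫ ≤ ‖x‖ * c := by
    rw [← inner_coordRestrict_right_of_support hxS]
    exact (neg_le_abs _).trans (abs_real_inner_le_norm _ _)
  have hx0 : 0 < ‖x‖ := pos_of_mul_pos_left (hpos.trans_le hxc) (norm_nonneg _)
  have hc : 0 < c := pos_of_mul_pos_right (hpos.trans_le hxc) (norm_nonneg _)
  have hgap := sq_norm_coordRestrict_add_sq_atomNormSigma_compl_le_deltaSuffGap hk hn hxS z
  calc deltaSuffRatio n k x z ≤ (‖x‖ * c) / (‖x‖ * √(c ^ 2 + d ^ 2)) :=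
        div_le_div₀ (by positivity) hxc (by positivity)
          (mul_le_mul_of_nonneg_left (Real.sqrt_le_sqrt hgap) (norm_nonneg _))
    _ = c / √(c ^ 2 + d ^ 2) := mul_div_mul_left _ _ hx0.ne'
    _ ≤ _ := div_sqrt_sq_add_sq_le (hc.trans_le (hT.norm_coordRestrict_le hST))
        (atomNormSigma_nonneg _) hc.le (hT.norm_coordRestrict_le hST)
        (hT.atomNormSigma_coordRestrict_compl_le hk hn hST)

theorem deltaSuffRatio_neg_coordRestrict (z : EuclideanSpace ℝ (Fin n)) (T : Finset (Fin n)) :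
    deltaSuffRatio n k (-coordRestrict z T) z = ‖coordRestrict z T‖ /
      √(‖coordRestrict z T‖ ^ 2 + atomNormSigma n k (coordRestrict z Tᶜ) ^ 2) := by
  have hinner := inner_coordRestrict_left_self z T
  have hadd : -coordRestrict z T + z = coordRestrict z Tᶜ :=
    neg_add_eq_of_eq_add (coordRestrict_add_coordRestrict_compl z T).symm
  have hgap : deltaSuffGap n k (-coordRestrict z T) z =
      ‖coordRestrict z T‖ ^ 2 + atomNormSigma n k (coordRestrict z Tᶜ) ^ 2 := by
    rw [deltaSuffGap, hadd, norm_neg, inner_neg_left, hinner]; ring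
  rw [deltaSuffRatio, hgap, inner_neg_left, hinner, neg_neg, norm_neg]
  rcases eq_or_ne ‖coordRestrict z T‖ 0 with h0 | h0
  · simp [h0]
  · rw [sq, mul_div_mul_left _ _ h0]

theorem sSup_deltaSuffRatio (hk : 0 < k) (hkn : k ≤ n) {z : EuclideanSpace ℝ (Fin n)} (hz : z ≠ 0)
    {T : Finset (Fin n)} (hT : IsTopCoords z T) (hTk : #T = k) :
    sSup {r | ∃ x ∈ sparseVecs n k \ {0}, r = deltaSuffRatio n k x z} =
      1 / √(atomNormSigma n k (coordRestrict z Tᶜ) ^ 2 / ‖coordRestrict z T‖ ^ 2 + 1) := by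
  have ha := hT.norm_coordRestrict_pos (card_pos.1 (hTk ▸ hk)) hz
  have hmem : -coordRestrict z T ∈ sparseVecs n k \ {0} :=
    ⟨neg_mem_sparseVecs (coordRestrict_mem_sparseVecs_of_card_le z hTk.le),
      neg_ne_zero.2 (norm_pos_iff.1 ha)⟩
  have hgreatest : IsGreatest {r | ∃ x ∈ sparseVecs n k \ {0}, r = deltaSuffRatio n k x z}
      (‖coordRestrict z T‖ /
        √(‖coordRestrict z T‖ ^ 2 + atomNormSigma n k (coordRestrict z Tᶜ) ^ 2)) := by
    refine ⟨⟨_, hmem, (deltaSuffRatio_neg_coordRestrict z T).symm⟩, ?_⟩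
    rintro r ⟨x, hx, rfl⟩
    exact deltaSuffRatio_le hk hkn hT hTk hx.1
  rw [hgreatest.csSup_eq, div_sqrt_sq_add_sq_eq ha]

theorem neg_two_smul_mem_descentCone {R : EuclideanSpace ℝ (Fin n) → ℝ}
    (hR : ∀ (c : ℝ) (x : EuclideanSpace ℝ (Fin n)), R (c • x) = |c| * R x)
    (x : EuclideanSpace ℝ (Fin n)) : (-2 : ℝ) • x ∈ descentCone R x := by
  show R (x + (-2 : ℝ) • x) ≤ R x
  rw [show x + (-2 : ℝ) • x = (-1 : ℝ) • x by module, hR]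
  norm_num

end

/-- Proposition 1 of the paper, characterization of the sufficient RIP constant
`δ_Σ^{suff}(R)`. `T` picks, for each `z`, `k` indices carrying the `k` largest absolute values
of coordinates of `z`. -/
theorem deltaSuff_characterization
    (n k : ℕ) (hk : 1 ≤ k) (hkn : k ≤ n)
    (T : EuclideanSpace ℝ (Fin n) → Finset (Fin n))
    (hT : ∀ z, (T z).card = k ∧ ∀ i ∈ T z, ∀ j ∉ T z, |z j| ≤ |z i|) :
    (∀ z : EuclideanSpace ℝ (Fin n), z ≠ 0 →
      (∀ x ∈ sparseVecs n k \ {0},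
        0 < (atomNormSigma n k (x + z)) ^ 2 - ‖x‖ ^ 2 - 2 * ⟪x, z⟫) ∧
      sSup {r : ℝ | ∃ x ∈ sparseVecs n k \ {0},
          r = -⟪x, z⟫ /
            (‖x‖ * Real.sqrt ((atomNormSigma n k (x + z)) ^ 2 - ‖x‖ ^ 2 - 2 * ⟪x, z⟫))}
        = 1 / Real.sqrt
            ((atomNormSigma n k (coordRestrict z (T z)ᶜ)) ^ 2 / ‖coordRestrict z (T z)‖ ^ 2 + 1))
    ∧ ∀ R : EuclideanSpace ℝ (Fin n) → ℝ,
        (∀ (c : ℝ) (x : EuclideanSpace ℝ (Fin n)), R (c • x) = |c| * R x) →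
        (∀ x y, R (x + y) ≤ R x + R y) →
        (∀ x, R x = 0 → x = 0) →
        sInf {s : ℝ | ∃ z ∈ descentConeSet R (sparseVecs n k) \ {0},
            s = sSup {r : ℝ | ∃ x ∈ sparseVecs n k \ {0},
              r = -⟪x, z⟫ /
                (‖x‖ * Real.sqrt ((atomNormSigma n k (x + z)) ^ 2 - ‖x‖ ^ 2 - 2 * ⟪x, z⟫))}}
          = 1 / Real.sqrt
              (sSup {d : ℝ | ∃ z ∈ descentConeSet R (sparseVecs n k) \ {0},
                d = (atomNormSigma n k (coordRestrict z (T z)ᶜ)) ^ 2 /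
                  ‖coordRestrict z (T z)‖ ^ 2} + 1) := by
  have hn : 0 < n := Nat.lt_of_lt_of_le hk hkn
  have hsSup (z) (hz : z ≠ 0) := sSup_deltaSuffRatio hk hkn hz (hT z).2 (hT z).1
  refine ⟨fun z hz => ⟨fun x hx => deltaSuffGap_pos hk hn hx.1 hz, hsSup z hz⟩,
    fun R hR _ _ => ?_⟩
  have he : (-2 : ℝ) • EuclideanSpace.single (⟨0, hn⟩ : Fin n) (1 : ℝ) ∈
      descentConeSet R (sparseVecs n k) \ {0} :=
    ⟨Set.mem_biUnion (single_mem_sparseVecs hk _ _) (neg_two_smul_mem_descentCone hR _),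
      by simp⟩
  refine sInf_eq_one_div_sqrt_sSup_add_one _ _ (fun z hz => hsSup z hz.2) ⟨_, he⟩
    (fun z _ => by positivity) ⟨(n : ℝ) ^ 3, ?_⟩
  rintro d ⟨z, hz, rfl⟩
  exact IsTopCoords.sq_atomNormSigma_div_sq_norm_le hk hn (hT z).2
    (Finset.card_pos.1 ((hT z).1 ▸ hk)) hz.2

end
end
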